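/- In the symmetric group algebra ℚ[S_n], for the Jucys-Murphy elements X_i = Σ_{j<i} (j i), the elementary symmetric polynomial satisfies e_ℓ(X_1,…,X_n) = Σ_{σ ∈ S_n, κ(σ)=n−ℓ} σ, where κ(σ) is the number of cycles of σ including fixed points. -/

import Mathlib

/-- The group algebra `ℚ[S_n]`, with `S_n` realized as permutations of `Fin n`. -/
abbrev QSn (n : ℕ) : Type := MonoidAlgebra ℚ (Equiv.Perm (Fin n))

/-- The Jucys-Murphy element `X_i = Σ_{j<i} (j i)`. -/
noncomputable def JM (n : ℕ) (i : Fin n) : QSn n :=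
  ∑ j ∈ Finset.univ.filter (· < i), MonoidAlgebra.of ℚ (Equiv.Perm (Fin n)) (Equiv.swap j i)

/-- Elementary symmetric polynomial in the Jucys-Murphy elements, the products being taken in
increasing order of the indices (unambiguous, since the `X_i` commute). -/
noncomputable def eJM (n ℓ : ℕ) : QSn n :=
  ∑ s ∈ Finset.univ.powersetCard ℓ, ((s.sort (· ≤ ·)).map (JM n)).prod

/-- number of cycles of `σ`, including fixed points -/
def kappa {n : ℕ} (σ : Equiv.Perm (Fin n)) : ℕ :=
  σ.cycleType.card + (Finset.univ.filter fun x => σ x = x).card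

/-!
Let `absLength σ = #support σ - #cycles σ`, which is `n - κ(σ)` on `S_n`. If `σ` fixes `a` and
`j ≠ a`, then `σ * (j a)` inserts `a` into the cycle of `j`, so its absolute length is one more;
conversely every `τ` moving `a` arises in this way from exactly one pair `(σ, j)`, namely
`j = τ⁻¹ a`. Hence for `a ∉ S` the sum of the permutations supported in `S ∪ {a}` of absolute
length `ℓ + 1` is the sum over those supported in `S` plus (the sum over `S` of length `ℓ`)
times `Σ_{j ∈ S} (j a)`. For `S = {0, …, m-1}` and `a = m` the last factor is `X_m`, and the
partial elementary symmetric sums `e_ℓ(X_0, …, X_{m-1})` satisfy the same recursion, since the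
products are ordered so that `X_m` comes last. Induction on `m` gives the theorem at `m = n`.
-/

open Equiv Finset

namespace Equiv.Perm

variable {α : Type*} [Fintype α] [DecidableEq α]

def absLength (σ : Perm α) : ℕ := #σ.support - Multiset.card σ.cycleType

theorem card_cycleType_le_card_support (σ : Perm α) :
    Multiset.card σ.cycleType ≤ #σ.support := by
  rw [← sum_cycleType]
  simpa using Multiset.card_nsmul_le_sum fun _ hx => (two_le_of_mem_cycleType hx).trans' one_le_two

@[simp]
theorem absLength_one : absLength (1 : Perm α) = 0 := by
  simp [absLength]

theorem IsCycle.absLength {c : Perm α} (hc : c.IsCycle) : c.absLength = #c.support - 1 := by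
  rw [Perm.absLength, card_cycleType_eq_one.mpr hc]

theorem Disjoint.absLength_mul {f g : Perm α} (h : f.Disjoint g) :
    (f * g).absLength = f.absLength + g.absLength := by
  have hf := card_cycleType_le_card_support f
  have hg := card_cycleType_le_card_support g
  simp only [Perm.absLength, h.cycleType_mul, h.card_support_mul, Multiset.card_add]
  omega

/-- Left multiplication by `swap x (τ x)` detaches `x` from its cycle `c`: either `c` is that
transposition and disappears, or `c` loses the point `x`. -/
theorem absLength_swap_mul_add_one {τ : Perm α} {x : α} (hx : τ x ≠ x) :
    absLength (swap x (τ x) * τ) + 1 = absLength τ := by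
  set c := τ.cycleOf x
  have hc : c.IsCycle := isCycle_cycleOf τ hx
  have hcx : c x = τ x := cycleOf_apply_self τ x
  have hdc : (τ * c⁻¹).Disjoint c := disjoint_mul_inv_of_mem_cycleFactorsFinset
    (cycleOf_mem_cycleFactorsFinset_iff.mpr (mem_support.mpr hx))
  have hτ : τ = c * (τ * c⁻¹) := by rw [← hdc.commute.eq, inv_mul_cancel_right]
  have hsplit : swap x (τ x) * τ = (swap x (c x) * c) * (τ * c⁻¹) := by
    rw [hcx, mul_assoc, ← hτ]
  rw [hsplit, congrArg absLength hτ, hdc.symm.absLength_mul]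
  by_cases hcc : c (c x) = x
  · have hcswap : c = swap x (c x) := hc.eq_swap_of_apply_apply_eq_self (hcx ▸ hx) hcc
    have hxcx : x ≠ c x := (hcx ▸ hx).symm
    rw [show swap x (c x) * c = 1 by rw [hcswap]; simp, one_mul, hcswap,
      (isCycle_swap hxcx).absLength, card_support_swap hxcx]
    omega
  · have hdc' : (swap x (c x) * c).Disjoint (τ * c⁻¹) := hdc.symm.mono
      (by rw [support_swap_mul_eq c x hcc]; exact sdiff_subset) le_rfl
    rw [hdc'.absLength_mul, (hc.swap_mul (hcx ▸ hx) hcc).absLength, hc.absLength,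
      support_swap_mul_eq c x hcc, card_sdiff_of_subset (by simpa using hcx ▸ hx)]
    have := hc.two_le_card_support
    rw [card_singleton]
    omega

theorem absLength_mul_swap {σ : Perm α} {j a : α} (ha : σ a = a) (hja : j ≠ a) :
    absLength (σ * swap j a) = absLength σ + 1 := by
  have hτa : (σ * swap j a) a = σ j := by simp
  have hσj : σ j ≠ a := fun h => hja (σ.injective (h.trans ha.symm))
  rw [← absLength_swap_mul_add_one (hτa ▸ hσj : (σ * swap j a) a ≠ a), hτa,
    mul_swap_eq_swap_mul, ha, swap_comm, ← mul_assoc, swap_mul_self, one_mul]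

theorem absLength_eq_zero_iff {σ : Perm α} : absLength σ = 0 ↔ σ = 1 := by
  refine ⟨fun h => ?_, fun h => h ▸ absLength_one⟩
  by_contra hσ
  obtain ⟨x, hx⟩ := not_forall.mp (mt Perm.ext_iff.mpr hσ)
  have := absLength_swap_mul_add_one hx
  omega


def permsOfAbsLength (S : Finset α) (ℓ : ℕ) : Finset (Perm α) :=
  {σ | σ.support ⊆ S ∧ σ.absLength = ℓ}

theorem mem_permsOfAbsLength {S : Finset α} {ℓ : ℕ} {σ : Perm α} :
    σ ∈ permsOfAbsLength S ℓ ↔ σ.support ⊆ S ∧ σ.absLength = ℓ := by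
  simp [permsOfAbsLength]

theorem permsOfAbsLength_zero (S : Finset α) : permsOfAbsLength S 0 = {1} := by
  ext σ
  simp only [mem_permsOfAbsLength, absLength_eq_zero_iff, mem_singleton, and_iff_right_iff_imp]
  rintro rfl
  simp

theorem permsOfAbsLength_empty_succ (ℓ : ℕ) : permsOfAbsLength (∅ : Finset α) (ℓ + 1) = ∅ := by
  ext σ
  simp only [mem_permsOfAbsLength, subset_empty, support_eq_empty_iff, notMem_empty, iff_false,
    not_and]
  rintro rfl
  simp

theorem filter_permsOfAbsLength_insert_apply_eq {S : Finset α} {a : α} (ha : a ∉ S) (ℓ : ℕ) :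
    {σ ∈ permsOfAbsLength (insert a S) ℓ | σ a = a} = permsOfAbsLength S ℓ := by
  ext σ
  simp only [mem_filter, mem_permsOfAbsLength]
  constructor
  · rintro ⟨⟨hsupp, hlen⟩, hfix⟩
    refine ⟨fun x hx => (mem_insert.mp (hsupp hx)).resolve_left ?_, hlen⟩
    rintro rfl
    exact mem_support.mp hx hfix
  · rintro ⟨hsupp, hlen⟩
    exact ⟨⟨hsupp.trans (subset_insert a S), hlen⟩, notMem_support.mp fun h => ha (hsupp h)⟩

theorem support_mul_swap_subset {σ : Perm α} {S : Finset α} {j a : α} (hσ : σ.support ⊆ S)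
    (hj : j ∈ S) : (σ * swap j a).support ⊆ insert a S := by
  intro x hx
  rcases mem_union.mp (support_mul_le σ (swap j a) hx) with hx | hx
  · exact mem_insert_of_mem (hσ hx)
  · rcases (swap_apply_ne_self_iff.mp (mem_support.mp hx)).2 with rfl | rfl
    · exact mem_insert_of_mem hj
    · exact mem_insert_self x S

theorem sum_filter_permsOfAbsLength_insert_apply_ne {M : Type*} [AddCommMonoid M]
    (f : Perm α → M) {S : Finset α} {a : α} (ha : a ∉ S) (ℓ : ℕ) :
    ∑ τ ∈ permsOfAbsLength (insert a S) (ℓ + 1) with τ a ≠ a, f τ =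
      ∑ p ∈ permsOfAbsLength S ℓ ×ˢ S, f (p.1 * swap p.2 a) := by
  symm
  refine sum_nbij' (fun p => p.1 * swap p.2 a) (fun τ => (τ * swap (τ⁻¹ a) a, τ⁻¹ a))
    ?_ ?_ ?_ ?_ (fun _ _ => rfl)
  · rintro ⟨σ, j⟩ hp
    simp only [mem_product, mem_permsOfAbsLength] at hp
    obtain ⟨⟨hsupp, hlen⟩, hj⟩ := hp
    have hja : j ≠ a := fun h => ha (h ▸ hj)
    have hσa : σ a = a := notMem_support.mp fun h => ha (hsupp h)
    simp only [mem_filter, mem_permsOfAbsLength]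
    refine ⟨⟨support_mul_swap_subset hsupp hj, by rw [absLength_mul_swap hσa hja, hlen]⟩, ?_⟩
    rw [mul_apply, swap_apply_right]
    exact fun h => hja (σ.injective (h.trans hσa.symm))
  · intro τ hτ
    simp only [mem_filter, mem_permsOfAbsLength] at hτ
    obtain ⟨⟨hsupp, hlen⟩, hτa⟩ := hτ
    have hτj : τ (τ⁻¹ a) = a := τ.apply_symm_apply a
    have hja : τ⁻¹ a ≠ a := fun h => hτa (by rwa [h] at hτj)
    have hj : τ⁻¹ a ∈ S :=
      (mem_insert.mp (hsupp (mem_support.mpr (by rw [hτj]; exact hja.symm)))).resolve_left hja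
    have hσa : (τ * swap (τ⁻¹ a) a) a = a := by rw [mul_apply, swap_apply_right, hτj]
    have hlen' := absLength_mul_swap hσa hja
    rw [mul_swap_mul_self] at hlen'
    simp only [mem_product, mem_permsOfAbsLength]
    refine ⟨⟨fun x hx => ?_, by omega⟩, hj⟩
    rcases mem_insert.mp (support_mul_swap_subset hsupp (mem_insert_of_mem hj) hx) with rfl | h
    · exact absurd hσa (mem_support.mp hx)
    · exact (mem_insert.mp h).resolve_left fun hxa => mem_support.mp hx (hxa ▸ hσa)
  · rintro ⟨σ, j⟩ hp
    simp only [mem_product, mem_permsOfAbsLength] at hp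
    have hσa : σ a = a := notMem_support.mp fun h => ha (hp.1.1 h)
    have hσa' : σ⁻¹ a = a := inv_eq_iff_eq.mpr hσa.symm
    have hj : (σ * swap j a)⁻¹ a = j := by
      rw [mul_inv_rev, mul_apply, swap_inv, hσa', swap_apply_right]
    change (σ * swap j a * swap ((σ * swap j a)⁻¹ a) a, (σ * swap j a)⁻¹ a) = (σ, j)
    rw [hj, mul_swap_mul_self]
  · intro τ _
    exact mul_swap_mul_self _ _ τ

theorem sum_of_permsOfAbsLength_insert_succ {k : Type*} [Semiring k] {S : Finset α} {a : α}
    (ha : a ∉ S) (ℓ : ℕ) :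
    ∑ τ ∈ permsOfAbsLength (insert a S) (ℓ + 1), MonoidAlgebra.of k (Perm α) τ =
      ∑ σ ∈ permsOfAbsLength S (ℓ + 1), MonoidAlgebra.of k (Perm α) σ +
        (∑ σ ∈ permsOfAbsLength S ℓ, MonoidAlgebra.of k (Perm α) σ) *
          ∑ j ∈ S, MonoidAlgebra.of k (Perm α) (swap j a) := by
  rw [← sum_filter_add_sum_filter_not _ (fun τ => τ a = a),
    filter_permsOfAbsLength_insert_apply_eq ha, sum_filter_permsOfAbsLength_insert_apply_ne _ ha,
    sum_mul_sum, sum_product]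
  simp only [map_mul]

end Equiv.Perm

theorem Finset.sort_insert_of_forall_lt {β : Type*} [LinearOrder β] {s : Finset β} {a : β}
    (h : ∀ b ∈ s, b < a) : (insert a s).sort (· ≤ ·) = s.sort (· ≤ ·) ++ [a] := by
  have ha : a ∉ s := fun ha => lt_irrefl a (h a ha)
  refine List.Perm.eq_of_pairwise' (pairwise_sort _ _) ?_ ?_
  · exact List.pairwise_append.mpr ⟨pairwise_sort _ _, List.pairwise_singleton _ _,
      fun b hb c hc => (List.mem_singleton.mp hc) ▸ (h b ((mem_sort _).mp hb)).le⟩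
  · rw [← Multiset.coe_eq_coe, ← Multiset.coe_add, sort_eq, sort_eq, insert_val_of_notMem ha,
      Multiset.coe_singleton, add_comm, Multiset.singleton_add]

theorem Finset.sum_powersetCard_succ_insert {β M : Type*} [DecidableEq β] [AddCommMonoid M]
    {s : Finset β} {a : β} (ha : a ∉ s) (k : ℕ) (f : Finset β → M) :
    ∑ t ∈ (insert a s).powersetCard (k + 1), f t =
      ∑ t ∈ s.powersetCard (k + 1), f t + ∑ t ∈ s.powersetCard k, f (insert a t) := by
  rw [powersetCard_succ_insert ha, sum_union, sum_image]
  · exact insert_erase_invOn.2.injOn.mono fun t ht ↦ notMem_mono (mem_powersetCard.1 ht).1 ha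
  · aesop (add simp [disjoint_left, insert_subset_iff, mem_powersetCard])

section JucysMurphy

open MonoidAlgebra

variable {n : ℕ}

noncomputable def prodJM (s : Finset (Fin n)) : QSn n :=
  ((s.sort (· ≤ ·)).map (JM n)).prod

theorem prodJM_insert_of_forall_lt {s : Finset (Fin n)} {a : Fin n} (h : ∀ b ∈ s, b < a) :
    prodJM (insert a s) = prodJM s * JM n a := by
  rw [prodJM, prodJM, sort_insert_of_forall_lt h, List.map_append, List.prod_append,
    List.map_singleton, List.prod_singleton]

def initSeg (n m : ℕ) : Finset (Fin n) := {i | (i : ℕ) < m}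

theorem mem_initSeg {m : ℕ} {i : Fin n} : i ∈ initSeg n m ↔ (i : ℕ) < m := by
  simp [initSeg]

theorem initSeg_zero : initSeg n 0 = ∅ := by
  ext i
  simp [mem_initSeg]

theorem initSeg_self : initSeg n n = univ := by
  ext i
  simp [mem_initSeg]

theorem initSeg_succ {m : ℕ} (hm : m < n) :
    initSeg n (m + 1) = insert ⟨m, hm⟩ (initSeg n m) := by
  ext i
  simp only [mem_initSeg, mem_insert, Fin.ext_iff]
  omega

theorem JM_eq_sum_initSeg {m : ℕ} (hm : m < n) :
    JM n ⟨m, hm⟩ = ∑ j ∈ initSeg n m, of ℚ _ (swap j ⟨m, hm⟩) :=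
  rfl

theorem sum_powersetCard_initSeg_prodJM {m : ℕ} (hm : m ≤ n) (ℓ : ℕ) :
    ∑ s ∈ (initSeg n m).powersetCard ℓ, prodJM s =
      ∑ σ ∈ Perm.permsOfAbsLength (initSeg n m) ℓ, of ℚ _ σ := by
  induction m generalizing ℓ with
  | zero =>
    rcases ℓ with _ | ℓ
    · simp [Perm.permsOfAbsLength_zero, prodJM, MonoidAlgebra.one_def]
    · rw [initSeg_zero, powersetCard_eq_empty.mpr (Nat.succ_pos ℓ),
        Perm.permsOfAbsLength_empty_succ, sum_empty, sum_empty]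
  | succ m ih =>
    rcases ℓ with _ | ℓ
    · simp [Perm.permsOfAbsLength_zero, prodJM, MonoidAlgebra.one_def]
    · have hm' : m < n := hm
      have ha : (⟨m, hm'⟩ : Fin n) ∉ initSeg n m := by simp [mem_initSeg]
      rw [initSeg_succ hm', sum_powersetCard_succ_insert ha,
        Perm.sum_of_permsOfAbsLength_insert_succ ha, ← ih hm'.le, ← ih hm'.le, ← JM_eq_sum_initSeg,
        sum_mul]
      congr 1
      refine sum_congr rfl fun s hs => prodJM_insert_of_forall_lt fun b hb => ?_
      exact mem_initSeg.mp ((mem_powersetCard.mp hs).1 hb)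

end JucysMurphy

theorem kappa_add_absLength {n : ℕ} (σ : Perm (Fin n)) : kappa σ + σ.absLength = n := by
  have hfix := card_filter_add_card_filter_not (s := univ) fun x => σ x = x
  have := σ.card_cycleType_le_card_support
  rw [card_univ, Fintype.card_fin] at hfix
  rw [kappa, Perm.absLength]
  change _ + #σ.support = n at hfix
  omega

/-- `e_ℓ(X_1,…,X_n) = Σ_{σ ∈ S_n, κ(σ)=n-ℓ} σ` in `ℚ[S_n]`. -/
theorem eJM_eq (n ℓ : ℕ) (hl : ℓ ≤ n) :
    eJM n ℓ = ∑ σ : Equiv.Perm (Fin n),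
      if kappa σ = n - ℓ then MonoidAlgebra.of ℚ (Equiv.Perm (Fin n)) σ else 0 := by
  have h := sum_powersetCard_initSeg_prodJM (le_refl n) ℓ
  rw [initSeg_self] at h
  rw [eJM, ← sum_filter]
  refine h.trans (sum_congr ?_ fun _ _ => rfl)
  ext σ
  have := kappa_add_absLength σ
  simp only [Perm.mem_permsOfAbsLength, subset_univ, true_and, mem_filter, mem_univ]
  omega
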